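/- arXiv:1301.4706 — 3 statements merged into one kernel-verified Lean document; each statement's English description precedes it below -/
import Mathlib

section
/- (Matrix instance of Lemma 2.6.) Let a, b ∈ M_n(ℂ) with b Hermitian, and let θ ∈ (0,1). Then for every k with 0 ≤ k ≤ n, the sum of the k largest singular values of exp(θ·b) · a · exp((1-θ)·b) is at most Σ_{i<k} max(σ_i(a·exp(b)), σ_i(exp(b)·a)), where σ_i(X) denotes the i-th largest singular value of X. -/
/-!
Let `G(z) = exp(z b) a exp((1 - z) b)`, so that `G(0) = a exp b`, `G(1) = exp b a` and `G(θ)` is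
the matrix of the theorem. On the line `re z = x` one has `G(z) = U G(x) U*` with the unitary
`U = exp(i (im z) b)`, so `G(z)` has the singular values of `G(x)`. Fix singular vector bases
`l, r` of `G(θ)` and put `F(z) = ∑_{i<k} ⟪l i, G(z) r i⟫`; this is entire, `F(θ)` is the Ky Fan
`k`-sum of `G(θ)`, and by Ky Fan's maximum principle `|F(z)|` is at most the Ky Fan `k`-sum of
`G(re z)`. Hadamard's three lines theorem then bounds the Ky Fan sum of `G(θ)` by the geometric
mean of those of `G(0)` and `G(1)`, hence by the sum of `max (σ_i (a exp b)) (σ_i (exp b a))`.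
-/

open scoped BigOperators ComplexOrder

/-- The singular values of a square complex matrix, i.e. the eigenvalues of
`(Aᴴ * A)^(1/2)`, arranged in decreasing order: `singularValues A 0` is the largest. -/
noncomputable def singularValues {m : ℕ} (A : Matrix (Fin m) (Fin m) ℂ) : Fin m → ℝ :=
  fun i =>
    Real.sqrt
      (((Matrix.isHermitian_conjTranspose_mul_self A).eigenvalues ∘
        Tuple.sort (Matrix.isHermitian_conjTranspose_mul_self A).eigenvalues) i.rev)

/-- The sum of the `k` largest singular values of `A` (the Ky Fan `k`-norm). -/
noncomputable def kyFanSum {m : ℕ} (A : Matrix (Fin m) (Fin m) ℂ) (k : ℕ) : ℝ :=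
  ∑ i ∈ Finset.univ.filter (fun i : Fin m => (i : ℕ) < k), singularValues A i

/-- The fractional power `b ^ θ` of a positive semidefinite matrix `b`, obtained by applying
`t ↦ t ^ θ` to the eigenvalues in a spectral decomposition. -/
noncomputable def psdPow {m : ℕ} {b : Matrix (Fin m) (Fin m) ℂ} (hb : b.PosSemidef) (θ : ℝ) :
    Matrix (Fin m) (Fin m) ℂ :=
  (hb.isHermitian.eigenvectorUnitary : Matrix (Fin m) (Fin m) ℂ) *
    Matrix.diagonal (fun i => ((hb.isHermitian.eigenvalues i ^ θ : ℝ) : ℂ)) *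
    (star hb.isHermitian.eigenvectorUnitary : Matrix (Fin m) (Fin m) ℂ)

open Finset Matrix NormedSpace Complex.HadamardThreeLines
open scoped InnerProductSpace

theorem sum_mul_le_sum_of_sum_le_card {ι : Type*} [Fintype ι] [DecidableEq ι] (s : Finset ι)
    {σ γ : ι → ℝ} {t : ℝ} (ht : 0 ≤ t) (hs : ∀ i ∈ s, t ≤ σ i) (hsc : ∀ i ∉ s, σ i ≤ t)
    (hγ0 : ∀ i, 0 ≤ γ i) (hγ1 : ∀ i, γ i ≤ 1) (hγ : ∑ i, γ i ≤ #s) :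
    ∑ i, σ i * γ i ≤ ∑ i ∈ s, σ i := by
  have key : ∀ i, σ i * γ i - (if i ∈ s then σ i else 0) ≤
      t * (γ i - if i ∈ s then 1 else 0) := by
    intro i
    by_cases hi : i ∈ s
    · simp only [if_pos hi]
      nlinarith [hs i hi, hγ1 i]
    · simp only [if_neg hi, sub_zero]
      exact mul_le_mul_of_nonneg_right (hsc i hi) (hγ0 i)
  have hsum := sum_le_sum fun i (_ : i ∈ univ) => key i
  simp only [sum_sub_distrib, ← mul_sum, sum_ite_mem, univ_inter, sum_const, nsmul_eq_mul,
    mul_one] at hsum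
  nlinarith

theorem sum_mul_le_sum_filter_lt {m k : ℕ} {σ γ : Fin m → ℝ} (hσ : Antitone σ)
    (hσ0 : ∀ i, 0 ≤ σ i) (hγ0 : ∀ i, 0 ≤ γ i) (hγ1 : ∀ i, γ i ≤ 1) (hγ : ∑ i, γ i ≤ k) :
    ∑ i, σ i * γ i ≤ ∑ i ∈ univ.filter (fun i : Fin m => (i : ℕ) < k), σ i := by
  by_cases hk : k < m
  · refine sum_mul_le_sum_of_sum_le_card _ (t := σ ⟨k, hk⟩) (hσ0 _) (fun i hi => hσ ?_)
      (fun i hi => hσ ?_) hγ0 hγ1 ?_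
    · exact Fin.mk_le_of_le_val (mem_filter.1 hi).2.le
    · exact Fin.le_def.2 (by simpa using hi)
    · rwa [Fin.card_filter_val_lt, min_eq_right hk.le]
  · have : (univ.filter fun i : Fin m => (i : ℕ) < k) = univ :=
      filter_true_of_mem fun i _ => by omega
    rw [this]
    exact sum_le_sum fun i _ => mul_le_of_le_one_right (hσ0 i) (hγ1 i)

section KyFan

variable {𝕜 E ι : Type*} [RCLike 𝕜] [NormedAddCommGroup E] [InnerProductSpace 𝕜 E] {m k : ℕ}

theorem OrthonormalBasis.sum_mul_sum_sq_norm_inner_le (e : OrthonormalBasis (Fin m) 𝕜 E)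
    {u : ι → E} (hu : Orthonormal 𝕜 u) {s : Finset ι} (hs : #s ≤ k) {σ : Fin m → ℝ}
    (hσ : Antitone σ) (hσ0 : ∀ i, 0 ≤ σ i) :
    ∑ i, σ i * ∑ j ∈ s, ‖⟪e i, u j⟫_𝕜‖ ^ 2 ≤
      ∑ i ∈ univ.filter (fun i : Fin m => (i : ℕ) < k), σ i := by
  refine sum_mul_le_sum_filter_lt hσ hσ0 (fun i => by positivity) (fun i => ?_) ?_
  · calc ∑ j ∈ s, ‖⟪e i, u j⟫_𝕜‖ ^ 2 = ∑ j ∈ s, ‖⟪u j, e i⟫_𝕜‖ ^ 2 := by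
          simp_rw [norm_inner_symm]
      _ ≤ ‖e i‖ ^ 2 := hu.sum_inner_products_le _
      _ = 1 := by simp
  · calc ∑ i, ∑ j ∈ s, ‖⟪e i, u j⟫_𝕜‖ ^ 2 = ∑ j ∈ s, ‖u j‖ ^ 2 := by
          rw [sum_comm]; simp_rw [e.sum_sq_norm_inner_right]
      _ = #s := by simp [hu.1]
      _ ≤ k := by exact_mod_cast hs

/-- Ky Fan's maximum principle (upper bound). -/
theorem norm_sum_inner_le_sum_filter_lt (l r : OrthonormalBasis (Fin m) 𝕜 E) {σ : Fin m → ℝ}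
    (hσ : Antitone σ) (hσ0 : ∀ i, 0 ≤ σ i) {T : E →L[𝕜] E}
    (hT : ∀ i, T (r i) = (σ i : 𝕜) • l i) {u v : ι → E} (hu : Orthonormal 𝕜 u)
    (hv : Orthonormal 𝕜 v) {s : Finset ι} (hs : #s ≤ k) :
    ‖∑ j ∈ s, ⟪u j, T (v j)⟫_𝕜‖ ≤ ∑ i ∈ univ.filter (fun i : Fin m => (i : ℕ) < k), σ i := by
  have expand : ∀ j, ⟪u j, T (v j)⟫_𝕜 = ∑ i, (σ i : 𝕜) * (⟪r i, v j⟫_𝕜 * ⟪u j, l i⟫_𝕜) := by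
    intro j
    conv_lhs => rw [← r.sum_repr' (v j)]
    simp only [map_sum, map_smul, hT, inner_sum, inner_smul_right]
    exact sum_congr rfl fun i _ => by ring
  have amgm : ∀ i j, ‖⟪r i, v j⟫_𝕜 * ⟪u j, l i⟫_𝕜‖ ≤
      (‖⟪l i, u j⟫_𝕜‖ ^ 2 + ‖⟪r i, v j⟫_𝕜‖ ^ 2) / 2 := by
    intro i j
    rw [norm_mul, norm_inner_symm (u j)]
    nlinarith [sq_nonneg (‖⟪r i, v j⟫_𝕜‖ - ‖⟪l i, u j⟫_𝕜‖)]
  calc ‖∑ j ∈ s, ⟪u j, T (v j)⟫_𝕜‖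
      = ‖∑ i, (σ i : 𝕜) * ∑ j ∈ s, ⟪r i, v j⟫_𝕜 * ⟪u j, l i⟫_𝕜‖ := by
        simp_rw [expand, mul_sum]; rw [sum_comm]
    _ ≤ ∑ i, σ i * ∑ j ∈ s, (‖⟪l i, u j⟫_𝕜‖ ^ 2 + ‖⟪r i, v j⟫_𝕜‖ ^ 2) / 2 := by
        refine (norm_sum_le _ _).trans (sum_le_sum fun i _ => ?_)
        rw [norm_mul, RCLike.norm_ofReal, abs_of_nonneg (hσ0 i)]
        exact mul_le_mul_of_nonneg_left
          ((norm_sum_le _ _).trans (sum_le_sum fun j _ => amgm i j)) (hσ0 i)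
    _ = (∑ i, σ i * ∑ j ∈ s, ‖⟪l i, u j⟫_𝕜‖ ^ 2 +
          ∑ i, σ i * ∑ j ∈ s, ‖⟪r i, v j⟫_𝕜‖ ^ 2) / 2 := by
        simp only [← sum_div, sum_add_distrib, mul_div_assoc', mul_add]
    _ ≤ ∑ i ∈ univ.filter (fun i : Fin m => (i : ℕ) < k), σ i := by
        linarith [l.sum_mul_sum_sq_norm_inner_le hu hs hσ hσ0,
          r.sum_mul_sum_sq_norm_inner_le hv hs hσ hσ0]

end KyFan

section SingularValueDecomposition

variable {n : ℕ} (A : Matrix (Fin n) (Fin n) ℂ)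

/-- `singularIndex A i` indexes the `i`-th largest eigenvalue of `Aᴴ * A`. -/
noncomputable def singularIndex : Equiv.Perm (Fin n) :=
  Fin.revPerm.trans (Tuple.sort (isHermitian_conjTranspose_mul_self A).eigenvalues)

theorem singularValues_nonneg (i : Fin n) : 0 ≤ singularValues A i := Real.sqrt_nonneg _

theorem sq_singularValues (i : Fin n) :
    singularValues A i ^ 2 =
      (isHermitian_conjTranspose_mul_self A).eigenvalues (singularIndex A i) :=
  Real.sq_sqrt ((posSemidef_conjTranspose_mul_self A).eigenvalues_nonneg _)

theorem antitone_singularValues : Antitone (singularValues A) := fun _ _ hij =>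
  Real.sqrt_le_sqrt (Tuple.monotone_sort _ (Fin.rev_le_rev.mpr hij))

theorem kyFanSum_nonneg (k : ℕ) : 0 ≤ kyFanSum A k :=
  sum_nonneg fun i _ => singularValues_nonneg A i

noncomputable def rightSingularBasis : OrthonormalBasis (Fin n) ℂ (EuclideanSpace ℂ (Fin n)) :=
  (isHermitian_conjTranspose_mul_self A).eigenvectorBasis.reindex (singularIndex A).symm

theorem inner_toEuclideanCLM_rightSingularBasis (i j : Fin n) :
    ⟪toEuclideanCLM (𝕜 := ℂ) A (rightSingularBasis A i),
        toEuclideanCLM (𝕜 := ℂ) A (rightSingularBasis A j)⟫_ℂ =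
      if i = j then ((singularValues A i ^ 2 : ℝ) : ℂ) else 0 := by
  have eigen : toEuclideanCLM (𝕜 := ℂ) (Aᴴ * A) (rightSingularBasis A j) =
      ((singularValues A j ^ 2 : ℝ) : ℂ) • rightSingularBasis A j := by
    ext1
    simp only [ofLp_toEuclideanCLM, rightSingularBasis, OrthonormalBasis.reindex_apply,
      Equiv.symm_symm, sq_singularValues, WithLp.ofLp_smul,
      (isHermitian_conjTranspose_mul_self A).mulVec_eigenvectorBasis]
    rfl
  rw [← ContinuousLinearMap.adjoint_inner_right, ← mul_apply_eq_comp,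
    ← ContinuousLinearMap.star_eq_adjoint, ← map_star, ← map_mul, star_eq_conjTranspose, eigen,
    inner_smul_right, orthonormal_iff_ite.1 (rightSingularBasis A).orthonormal]
  split_ifs with h <;> simp [h]

/-- Singular value decomposition: the left singular vectors `σ i⁻¹ • A (r i)` with `σ i ≠ 0` are
orthonormal, and are completed to an orthonormal basis. -/
theorem exists_orthonormalBasis_toEuclideanCLM_eq_smul :
    ∃ l r : OrthonormalBasis (Fin n) ℂ (EuclideanSpace ℂ (Fin n)),
      ∀ i, toEuclideanCLM (𝕜 := ℂ) A (r i) = (singularValues A i : ℂ) • l i := by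
  set v : Fin n → EuclideanSpace ℂ (Fin n) := fun i =>
    (singularValues A i : ℂ)⁻¹ • toEuclideanCLM (𝕜 := ℂ) A (rightSingularBasis A i)
  have hv : Orthonormal ℂ ({i | singularValues A i ≠ 0}.domRestrict v) := by
    rw [orthonormal_iff_ite]
    rintro ⟨i, hi⟩ ⟨j, hj⟩
    simp only [Set.domRestrict_apply, v, inner_smul_left, inner_smul_right,
      inner_toEuclideanCLM_rightSingularBasis, Subtype.mk.injEq]
    split_ifs with h
    · subst h
      have : (singularValues A i : ℂ) ≠ 0 := by exact_mod_cast hi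
      simp only [map_inv₀, Complex.conj_ofReal, Complex.ofReal_pow]
      field_simp
    · simp
  obtain ⟨l, hl⟩ := hv.exists_orthonormalBasis_extension_of_card_eq (by simp)
  refine ⟨l, rightSingularBasis A, fun i => ?_⟩
  by_cases hi : singularValues A i = 0
  · have h0 := inner_toEuclideanCLM_rightSingularBasis A i i
    rw [if_pos rfl, hi, zero_pow two_ne_zero, Complex.ofReal_zero, inner_self_eq_zero] at h0
    rw [h0, hi, Complex.ofReal_zero, zero_smul]
  · rw [hl i hi, smul_smul, mul_inv_cancel₀ (by exact_mod_cast hi), one_smul]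

theorem sum_inner_toEuclideanCLM_eq_kyFanSum
    {l r : OrthonormalBasis (Fin n) ℂ (EuclideanSpace ℂ (Fin n))}
    (hlr : ∀ i, toEuclideanCLM (𝕜 := ℂ) A (r i) = (singularValues A i : ℂ) • l i) (k : ℕ) :
    ∑ i ∈ univ.filter (fun i : Fin n => (i : ℕ) < k), ⟪l i, toEuclideanCLM (𝕜 := ℂ) A (r i)⟫_ℂ =
      kyFanSum A k := by
  simp [kyFanSum, hlr]

variable {ι : Type*} {u v : ι → EuclideanSpace ℂ (Fin n)} {s : Finset ι} {k : ℕ}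

theorem norm_sum_inner_toEuclideanCLM_le_kyFanSum (hu : Orthonormal ℂ u) (hv : Orthonormal ℂ v)
    (hs : #s ≤ k) : ‖∑ j ∈ s, ⟪u j, toEuclideanCLM (𝕜 := ℂ) A (v j)⟫_ℂ‖ ≤ kyFanSum A k := by
  obtain ⟨l, r, hlr⟩ := exists_orthonormalBasis_toEuclideanCLM_eq_smul A
  exact norm_sum_inner_le_sum_filter_lt l r (antitone_singularValues A)
    (singularValues_nonneg A) hlr hu hv hs

theorem norm_sum_inner_toEuclideanCLM_conj_le_kyFanSum {U : Matrix (Fin n) (Fin n) ℂ}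
    (hU : U ∈ unitary (Matrix (Fin n) (Fin n) ℂ)) (hu : Orthonormal ℂ u) (hv : Orthonormal ℂ v)
    (hs : #s ≤ k) :
    ‖∑ j ∈ s, ⟪u j, toEuclideanCLM (𝕜 := ℂ) (U * A * Uᴴ) (v j)⟫_ℂ‖ ≤ kyFanSum A k := by
  set V := toEuclideanCLM (𝕜 := ℂ) Uᴴ
  have hV : V ∈ unitary _ := Unitary.map_mem _ (Unitary.star_mem hU)
  have transport : ∀ {w : ι → EuclideanSpace ℂ (Fin n)}, Orthonormal ℂ w → Orthonormal ℂ (V ∘ w) :=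
    fun hw => hw.comp_linearIsometryEquiv (Unitary.linearIsometryEquiv ⟨V, hV⟩)
  have conj : ∀ x y, ⟪x, toEuclideanCLM (𝕜 := ℂ) (U * A * Uᴴ) y⟫_ℂ =
      ⟪V x, toEuclideanCLM (𝕜 := ℂ) A (V y)⟫_ℂ := by
    intro x y
    rw [map_mul, map_mul, mul_apply_eq_comp, mul_apply_eq_comp,
      ← ContinuousLinearMap.adjoint_inner_left, ← ContinuousLinearMap.star_eq_adjoint, ← map_star,
      star_eq_conjTranspose]
  simp_rw [conj]
  exact norm_sum_inner_toEuclideanCLM_le_kyFanSum A (transport hu) (transport hv) hs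

end SingularValueDecomposition

section ExpHermitian

variable {m : Type*} [Fintype m] [DecidableEq m] {b : Matrix m m ℂ}

theorem exp_smul_mul_exp_smul (w w' : ℂ) :
    exp (w • b) * exp (w' • b) = exp ((w + w') • b) := by
  rw [add_smul, Matrix.exp_add_of_commute _ _ (((Commute.refl b).smul_left w).smul_right w')]

theorem conjTranspose_exp_smul (hb : b.IsHermitian) (w : ℂ) :
    (exp (w • b))ᴴ = exp ((starRingEnd ℂ w) • b) := by
  rw [← Matrix.exp_conjTranspose, conjTranspose_smul, hb.eq]
  rfl

theorem exp_smul_mem_unitary (hb : b.IsHermitian) {w : ℂ} (hw : w.re = 0) :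
    exp (w • b) ∈ unitary (Matrix m m ℂ) := by
  refine mem_unitaryGroup_iff'.2 ?_
  rw [star_eq_conjTranspose, conjTranspose_exp_smul hb,
    exp_smul_mul_exp_smul, show starRingEnd ℂ w + w = 0 from Complex.ext (by simp [hw]) (by simp),
    zero_smul, exp_zero]

end ExpHermitian

section ExpInterp

variable {n : ℕ}

noncomputable def expInterp (a b : Matrix (Fin n) (Fin n) ℂ) (z : ℂ) : Matrix (Fin n) (Fin n) ℂ :=
  exp (z • b) * a * exp ((1 - z) • b)

variable (a : Matrix (Fin n) (Fin n) ℂ) {b : Matrix (Fin n) (Fin n) ℂ}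

theorem expInterp_zero : expInterp a b 0 = a * exp b := by simp [expInterp]

theorem expInterp_one : expInterp a b 1 = exp b * a := by simp [expInterp]

theorem expInterp_eq_conj (hb : b.IsHermitian) (z : ℂ) :
    expInterp a b z = exp ((z.im * Complex.I) • b) * expInterp a b z.re *
      (exp ((z.im * Complex.I) • b))ᴴ := by
  have hconj : starRingEnd ℂ (z.im * Complex.I) = -(z.im * Complex.I) :=
    Complex.ext (by simp) (by simp)
  rw [conjTranspose_exp_smul hb, hconj, expInterp, expInterp, ← mul_assoc, ← mul_assoc,
    exp_smul_mul_exp_smul, mul_assoc _ (exp _), exp_smul_mul_exp_smul,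
    show (z.im * Complex.I + z.re : ℂ) = z by linear_combination Complex.re_add_im z,
    show (1 - z.re + -(z.im * Complex.I) : ℂ) = 1 - z by linear_combination -Complex.re_add_im z]

end ExpInterp

section OperatorNorm

open scoped Matrix.Norms.L2Operator

variable {n : ℕ} (a b : Matrix (Fin n) (Fin n) ℂ)

theorem differentiable_expInterp : Differentiable ℂ (expInterp a b) := by
  have hexp : Differentiable ℂ fun z : ℂ => exp (z • b) := fun z =>
    (hasDerivAt_exp_smul_const (𝕂 := ℂ) b z).differentiableAt
  exact (hexp.mul (differentiable_const a)).mul (hexp.comp (differentiable_id.const_sub 1))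

theorem bddAbove_norm_expInterp (hb : b.IsHermitian) :
    BddAbove ((norm ∘ expInterp a b) '' verticalClosedStrip 0 1) := by
  have hcont : Continuous fun t : ℝ => ‖expInterp a b t‖ :=
    ((differentiable_expInterp a b).continuous.comp Complex.continuous_ofReal).norm
  obtain ⟨C, hC⟩ := (isCompact_Icc (a := (0 : ℝ)) (b := 1)).bddAbove_image hcont.continuousOn
  refine ⟨C, ?_⟩
  rintro _ ⟨z, hz, rfl⟩
  have hU := exp_smul_mem_unitary hb (w := z.im * Complex.I) (by simp)
  rw [Function.comp_apply, expInterp_eq_conj a hb, ← star_eq_conjTranspose,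
    CStarRing.norm_mul_mem_unitary _ (Unitary.star_mem hU), CStarRing.norm_mem_unitary_mul _ hU]
  exact hC ⟨z.re, hz, rfl⟩

variable {ι : Type*} (s : Finset ι) (x y : ι → EuclideanSpace ℂ (Fin n))
  {f : ℂ → Matrix (Fin n) (Fin n) ℂ}

theorem Differentiable.sum_inner_toEuclideanCLM (hf : Differentiable ℂ f) :
    Differentiable ℂ fun z => ∑ j ∈ s, ⟪x j, toEuclideanCLM (𝕜 := ℂ) (f z) (y j)⟫_ℂ := by
  have hT : Differentiable ℂ fun z => toEuclideanCLM (𝕜 := ℂ) (f z) :=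
    (LinearMap.toContinuousLinearMap
      (toEuclideanCLM (𝕜 := ℂ) (n := Fin n)).toAlgEquiv.toLinearMap).differentiable.comp hf
  exact Differentiable.fun_sum fun j _ =>
    (innerSL ℂ (x j)).differentiable.comp (hT.clm_apply (differentiable_const (y j)))

theorem BddAbove.norm_sum_inner_toEuclideanCLM {S : Set ℂ} (hf : BddAbove ((norm ∘ f) '' S)) :
    BddAbove ((norm ∘ fun z => ∑ j ∈ s, ⟪x j, toEuclideanCLM (𝕜 := ℂ) (f z) (y j)⟫_ℂ) '' S) := by
  obtain ⟨C, hC⟩ := hf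
  refine ⟨∑ j ∈ s, ‖x j‖ * C * ‖y j‖, ?_⟩
  rintro _ ⟨z, hz, rfl⟩
  refine (norm_sum_le _ _).trans (sum_le_sum fun j _ => ?_)
  calc ‖⟪x j, toEuclideanCLM (𝕜 := ℂ) (f z) (y j)⟫_ℂ‖
      ≤ ‖x j‖ * ‖toEuclideanCLM (𝕜 := ℂ) (f z) (y j)‖ := norm_inner_le_norm _ _
    _ ≤ ‖x j‖ * (‖f z‖ * ‖y j‖) := by gcongr; exact (toEuclideanCLM (𝕜 := ℂ) (f z)).le_opNorm _
    _ ≤ ‖x j‖ * C * ‖y j‖ := by rw [← mul_assoc]; gcongr; exact hC ⟨z, hz, rfl⟩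

end OperatorNorm

theorem kyFanSum_expInterp_le {n : ℕ} (a : Matrix (Fin n) (Fin n) ℂ) {b : Matrix (Fin n) (Fin n) ℂ}
    (hb : b.IsHermitian) {θ : ℝ} (hθ : θ ∈ Set.Icc (0 : ℝ) 1) (k : ℕ) :
    kyFanSum (expInterp a b θ) k ≤
      kyFanSum (a * exp b) k ^ (1 - θ) * kyFanSum (exp b * a) k ^ θ := by
  obtain ⟨l, r, hlr⟩ := exists_orthonormalBasis_toEuclideanCLM_eq_smul (expInterp a b θ)
  set s := univ.filter fun i : Fin n => (i : ℕ) < k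
  have edge : ∀ z : ℂ, ‖∑ i ∈ s, ⟪l i, toEuclideanCLM (𝕜 := ℂ) (expInterp a b z) (r i)⟫_ℂ‖ ≤
      kyFanSum (expInterp a b z.re) k := fun z => by
    rw [expInterp_eq_conj a hb]
    exact norm_sum_inner_toEuclideanCLM_conj_le_kyFanSum _ (exp_smul_mem_unitary hb (by simp))
      l.orthonormal r.orthonormal (by simp [s, Fin.card_filter_val_lt])
  have three_lines := norm_le_interp_of_mem_verticalClosedStrip₀₁' _ (z := θ) (by simpa)
    (((differentiable_expInterp a b).sum_inner_toEuclideanCLM s l r).diffContOnCl)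
    ((bddAbove_norm_expInterp a b hb).norm_sum_inner_toEuclideanCLM s l r)
    (fun z hz => by simpa [show z.re = 0 from hz, expInterp_zero] using edge z)
    (fun z hz => by simpa [show z.re = 1 from hz, expInterp_one] using edge z)
  rwa [sum_inner_toEuclideanCLM_eq_kyFanSum _ hlr, Complex.norm_real,
    Real.norm_of_nonneg (kyFanSum_nonneg _ k), Complex.ofReal_re] at three_lines

open NormedSpace in
/-- Matrix instance of Lemma 2.6: for arbitrary `a`, Hermitian `b` and `θ ∈ (0,1)`,
the Ky Fan sums of `exp(θb) * a * exp((1-θ)b)` are dominated by the corresponding sums of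
`max (σ_i (a * exp b)) (σ_i (exp b * a))`. -/
theorem stmt_4 {n : ℕ} (a b : Matrix (Fin n) (Fin n) ℂ)
    (hb : b.IsHermitian) (θ : ℝ) (hθ : θ ∈ Set.Ioo (0 : ℝ) 1) :
    ∀ k, k ≤ n →
      kyFanSum (exp ((θ : ℂ) • b) * a * exp (((1 - θ : ℝ) : ℂ) • b)) k ≤
        ∑ i ∈ Finset.univ.filter (fun i : Fin n => (i : ℕ) < k),
          max (singularValues (a * exp b) i) (singularValues (exp b * a) i) := by
  intro k _
  set R := ∑ i ∈ Finset.univ.filter (fun i : Fin n => (i : ℕ) < k),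
    max (singularValues (a * exp b) i) (singularValues (exp b * a) i)
  have hR : 0 ≤ R := sum_nonneg fun i _ => (singularValues_nonneg _ i).trans (le_max_left _ _)
  have hM : exp ((θ : ℂ) • b) * a * exp (((1 - θ : ℝ) : ℂ) • b) = expInterp a b θ := by
    rw [expInterp, Complex.ofReal_sub, Complex.ofReal_one]
  calc _ = kyFanSum (expInterp a b θ) k := by rw [hM]
    _ ≤ kyFanSum (a * exp b) k ^ (1 - θ) * kyFanSum (exp b * a) k ^ θ :=
        kyFanSum_expInterp_le a hb (Set.Ioo_subset_Icc_self hθ) k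
    _ ≤ R ^ (1 - θ) * R ^ θ := by
        have hX : kyFanSum (a * exp b) k ≤ R := sum_le_sum fun i _ => le_max_left _ _
        have hY : kyFanSum (exp b * a) k ≤ R := sum_le_sum fun i _ => le_max_right _ _
        exact mul_le_mul (Real.rpow_le_rpow (kyFanSum_nonneg _ k) hX (by linarith [hθ.2]))
          (Real.rpow_le_rpow (kyFanSum_nonneg _ k) hY hθ.1.le)
          (Real.rpow_nonneg (kyFanSum_nonneg _ k) _) (Real.rpow_nonneg hR _)
    _ = R := by rw [← Real.rpow_add' hR (by norm_num), sub_add_cancel, Real.rpow_one]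
end

section
/- (Example 2.5.) Let λ, μ ∈ ℝ with λ > μ, and in M₂(ℂ) let a be the matrix with (1,2)-entry equal to 1 and all other entries 0, and let b be the diagonal matrix diag(λ, μ). Then b is Hermitian, a · exp(b) = e^μ • a, exp(b/2) · a · exp(b/2) = e^((λ+μ)/2) • a, and exp(b/2) · a · exp(b/2) is NOT submajorized by a · exp(b) in the sense of Hardy–Littlewood; in particular the largest singular value of exp(b/2) a exp(b/2), which equals e^((λ+μ)/2), strictly exceeds the largest singular value of a·exp(b), which equals e^μ. -/
open scoped BigOperators ComplexOrder

/-!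
Conjugating the nilpotent `a = !![0, 1; 0, 0]` by diagonal matrices only rescales it:
`diag d * a * diag d = (d₀ d₁) • a` and `a * diag d = d₁ • a`. Hence both matrices of the example
are positive multiples `c • a`, whose largest singular value is `c`, since `(c • a)ᴴ (c • a)` is
singular with trace `c²`. Submajorization then already fails at `k = 1`, as `e^μ < e^((λ + μ) / 2)`.
-/

open Matrix

lemma kyFanSum_one {m : ℕ} (A : Matrix (Fin (m + 1)) (Fin (m + 1)) ℂ) :
    kyFanSum A 1 = singularValues A 0 := by
  rw [kyFanSum, Finset.sum_eq_single_of_mem 0 (by simp)]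
  intro i hi hi0
  simp only [Finset.mem_filter, Finset.mem_univ, true_and, Nat.lt_one_iff] at hi
  exact absurd (Fin.ext hi) hi0

lemma singularValues_zero_of_det_eq_zero (A : Matrix (Fin 2) (Fin 2) ℂ) (hA : A.det = 0) :
    singularValues A 0 = √(Aᴴ * A).trace.re := by
  set H := isHermitian_conjTranspose_mul_self A
  set σ := Tuple.sort H.eigenvalues
  set e := H.eigenvalues ∘ σ
  have he_mono : e 0 ≤ e 1 := Tuple.monotone_sort _ (by decide)
  have he_nonneg : 0 ≤ e 0 := (posSemidef_conjTranspose_mul_self A).eigenvalues_nonneg _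
  have he_sum : e 0 + e 1 = (Aᴴ * A).trace.re := by
    have := congrArg Complex.re H.trace_eq_sum_eigenvalues
    rw [← Equiv.sum_comp σ] at this
    simpa [Fin.sum_univ_two, e] using this.symm
  have he_prod : e 0 * e 1 = 0 := by
    have := H.det_eq_prod_eigenvalues
    rw [det_mul, det_conjTranspose, hA, mul_zero, ← Equiv.prod_comp σ, Fin.prod_univ_two] at this
    exact (RCLike.ofReal_eq_zero (K := ℂ)).mp (by rw [RCLike.ofReal_mul]; exact this.symm)
  have he_zero : e 0 = 0 := by nlinarith
  show √(e (Fin.rev 0)) = _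
  rw [show Fin.rev (0 : Fin 2) = 1 from rfl, ← he_sum, he_zero, zero_add]

lemma singularValues_smul_single_zero_one (c : ℂ) :
    singularValues (c • !![0, 1; 0, 0]) 0 = ‖c‖ := by
  rw [singularValues_zero_of_det_eq_zero _ (by simp [det_fin_two])]
  have htrace : ((c • !![0, 1; 0, 0])ᴴ * (c • !![0, 1; 0, 0] : Matrix (Fin 2) (Fin 2) ℂ)).trace.re =
      ‖c‖ ^ 2 := by
    simp [trace_fin_two, mul_apply, Fin.sum_univ_two, Complex.conj_mul', ← Complex.ofReal_pow]
  rw [htrace, Real.sqrt_sq (norm_nonneg c)]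

section DiagonalConjugation

variable {α : Type*} [CommSemiring α]

lemma single_zero_one_mul_diagonal (d : Fin 2 → α) :
    !![0, 1; 0, 0] * diagonal d = d 1 • !![0, 1; 0, 0] := by
  ext i j; fin_cases i <;> fin_cases j <;> simp [mul_apply, Fin.sum_univ_two]

lemma diagonal_mul_single_zero_one_mul_diagonal (d : Fin 2 → α) :
    diagonal d * !![0, 1; 0, 0] * diagonal d = (d 0 * d 1) • !![0, 1; 0, 0] := by
  ext i j; fin_cases i <;> fin_cases j <;> simp [mul_apply, Fin.sum_univ_two]

end DiagonalConjugation

lemma exp_diagonal_ofReal (x y : ℝ) :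
    NormedSpace.exp (diagonal ![(x : ℂ), (y : ℂ)]) =
      diagonal ![(Real.exp x : ℂ), (Real.exp y : ℂ)] := by
  rw [exp_diagonal]
  congr 1
  ext i; fin_cases i <;> simp [← Complex.exp_eq_exp_ℂ, Complex.ofReal_exp]

open NormedSpace in
/-- Example 2.5: for `a = !![0,1;0,0]` and `b = diag(λ, μ)` with `λ > μ`, we have
`a * exp b = e^μ • a`, `exp(b/2) * a * exp(b/2) = e^((λ+μ)/2) • a`, the submajorization
`exp(b/2) * a * exp(b/2) ≺≺ a * exp b` fails, and the largest singular value of the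
left-hand side, `e^((λ+μ)/2)`, strictly exceeds that of the right-hand side, `e^μ`. -/
theorem stmt_5 (lam mu : ℝ) (h : mu < lam) :
    (Matrix.diagonal ![(lam : ℂ), (mu : ℂ)]).IsHermitian ∧
    (!![0, 1; 0, 0] : Matrix (Fin 2) (Fin 2) ℂ) * exp (Matrix.diagonal ![(lam : ℂ), (mu : ℂ)]) =
      ((Real.exp mu : ℝ) : ℂ) • (!![0, 1; 0, 0] : Matrix (Fin 2) (Fin 2) ℂ) ∧
    exp ((2 : ℂ)⁻¹ • Matrix.diagonal ![(lam : ℂ), (mu : ℂ)]) *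
        (!![0, 1; 0, 0] : Matrix (Fin 2) (Fin 2) ℂ) *
        exp ((2 : ℂ)⁻¹ • Matrix.diagonal ![(lam : ℂ), (mu : ℂ)]) =
      ((Real.exp ((lam + mu) / 2) : ℝ) : ℂ) • (!![0, 1; 0, 0] : Matrix (Fin 2) (Fin 2) ℂ) ∧
    ¬ (∀ k, k ≤ 2 →
        kyFanSum (exp ((2 : ℂ)⁻¹ • Matrix.diagonal ![(lam : ℂ), (mu : ℂ)]) *
            (!![0, 1; 0, 0] : Matrix (Fin 2) (Fin 2) ℂ) *
            exp ((2 : ℂ)⁻¹ • Matrix.diagonal ![(lam : ℂ), (mu : ℂ)])) k ≤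
          kyFanSum ((!![0, 1; 0, 0] : Matrix (Fin 2) (Fin 2) ℂ) *
            exp (Matrix.diagonal ![(lam : ℂ), (mu : ℂ)])) k) ∧
    singularValues (exp ((2 : ℂ)⁻¹ • Matrix.diagonal ![(lam : ℂ), (mu : ℂ)]) *
        (!![0, 1; 0, 0] : Matrix (Fin 2) (Fin 2) ℂ) *
        exp ((2 : ℂ)⁻¹ • Matrix.diagonal ![(lam : ℂ), (mu : ℂ)])) 0 =
      Real.exp ((lam + mu) / 2) ∧
    singularValues ((!![0, 1; 0, 0] : Matrix (Fin 2) (Fin 2) ℂ) *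
        exp (Matrix.diagonal ![(lam : ℂ), (mu : ℂ)])) 0 = Real.exp mu ∧
    singularValues ((!![0, 1; 0, 0] : Matrix (Fin 2) (Fin 2) ℂ) *
        exp (Matrix.diagonal ![(lam : ℂ), (mu : ℂ)])) 0 <
      singularValues (exp ((2 : ℂ)⁻¹ • Matrix.diagonal ![(lam : ℂ), (mu : ℂ)]) *
        (!![0, 1; 0, 0] : Matrix (Fin 2) (Fin 2) ℂ) *
        exp ((2 : ℂ)⁻¹ • Matrix.diagonal ![(lam : ℂ), (mu : ℂ)])) 0 := by
  have hb_half : (2 : ℂ)⁻¹ • diagonal ![(lam : ℂ), (mu : ℂ)] =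
      diagonal ![((lam / 2 : ℝ) : ℂ), ((mu / 2 : ℝ) : ℂ)] := by
    rw [← diagonal_smul]; congr 1; ext i; fin_cases i <;> simp [div_eq_inv_mul]
  have ha_exp : !![0, 1; 0, 0] * exp (diagonal ![(lam : ℂ), (mu : ℂ)]) =
      ((Real.exp mu : ℝ) : ℂ) • !![0, 1; 0, 0] := by
    rw [exp_diagonal_ofReal, single_zero_one_mul_diagonal]; rfl
  have ha_half : exp ((2 : ℂ)⁻¹ • diagonal ![(lam : ℂ), (mu : ℂ)]) * !![0, 1; 0, 0] *
      exp ((2 : ℂ)⁻¹ • diagonal ![(lam : ℂ), (mu : ℂ)]) =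
      ((Real.exp ((lam + mu) / 2) : ℝ) : ℂ) • !![0, 1; 0, 0] := by
    rw [hb_half, exp_diagonal_ofReal, diagonal_mul_single_zero_one_mul_diagonal]
    simp only [Matrix.cons_val_zero, Matrix.cons_val_one, ← Complex.ofReal_mul, ← Real.exp_add,
      add_div]
  have hσ : ∀ x : ℝ, singularValues (((Real.exp x : ℝ) : ℂ) • !![0, 1; 0, 0]) 0 = Real.exp x :=
    fun x => by
      rw [singularValues_smul_single_zero_one, Complex.norm_real, Real.norm_of_nonneg x.exp_nonneg]
  have hlt : Real.exp mu < Real.exp ((lam + mu) / 2) := Real.exp_lt_exp.mpr (by linarith)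
  refine ⟨isHermitian_diagonal_iff.mpr fun i => ?_, ha_exp, ha_half, fun hmaj => ?_,
    by rw [ha_half, hσ], by rw [ha_exp, hσ], by rwa [ha_half, ha_exp, hσ, hσ]⟩
  · fin_cases i <;> simp [isSelfAdjoint_iff]
  · have h1 := hmaj 1 (by norm_num)
    rw [kyFanSum_one, kyFanSum_one, ha_half, ha_exp, hσ, hσ] at h1
    linarith
end

section
/- (Matrix instance of Lemma 2.1, Ky Fan duality.) For every a ∈ M_n(ℂ) and every k with 0 ≤ k ≤ n, the sum of the k largest singular values of a equals the supremum of |Tr(a·c)| over all matrices c ∈ M_n(ℂ) whose ℓ²-operator norm is at most 1 (equivalently, 1 - cᴴc is positive semidefinite) and whose rank is at most k. -/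
open scoped BigOperators ComplexOrder Matrix

/-!
Write `a = U Σ Vᴴ` with `V` unitary, `U` a partial isometry and `Σ` the diagonal of singular
values `σᵢ`. For a contraction `c` of rank at most `k`, `Tr (a c) = ∑ σᵢ dᵢᵢ` where
`d = Vᴴ c U` is again a contraction of rank at most `k`. Then `|dᵢᵢ| ≤ 1`, and the singular value
decomposition of `d` gives `∑ |dᵢᵢ| ≤ ∑ σⱼ(d) ≤ rank d ≤ k`; a weighted sum `∑ σᵢ tᵢ` with
weights in `[0, 1]` of total mass at most `k` is bounded by the sum of the `k` largest `σᵢ`.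
The bound is attained at `c = V P Uᴴ`, with `P` the coordinate projection onto the indices of
the `k` largest singular values.
-/

open Matrix

-- In the Loewner order `cᴴ * c ≤ 1` unfolds to `(1 - cᴴ * c).PosSemidef`.
open scoped MatrixOrder

namespace Matrix

section Contraction

variable {m n : Type*} [Fintype m]

lemma conjTranspose_mul_self_apply_self (A : Matrix m n ℂ) (j : n) :
    (Aᴴ * A) j j = ((∑ i, ‖A i j‖ ^ 2 : ℝ) : ℂ) := by
  simp [mul_apply, Complex.conj_mul']

variable [DecidableEq n]

lemma sum_norm_sq_le_one_of_conjTranspose_mul_self_le_one {A : Matrix m n ℂ}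
    (hA : Aᴴ * A ≤ 1) (j : n) : ∑ i, ‖A i j‖ ^ 2 ≤ 1 := by
  have := (le_iff.mp hA).diag_nonneg (i := j)
  rwa [sub_apply, one_apply_eq, conjTranspose_mul_self_apply_self, ← Complex.ofReal_one,
    ← Complex.ofReal_sub, Complex.zero_le_real, sub_nonneg] at this

lemma norm_apply_le_one_of_conjTranspose_mul_self_le_one {A : Matrix m n ℂ}
    (hA : Aᴴ * A ≤ 1) (i : m) (j : n) : ‖A i j‖ ≤ 1 := by
  have hsq : ‖A i j‖ ^ 2 ≤ 1 :=
    (Finset.single_le_sum (fun i _ => sq_nonneg ‖A i j‖) (Finset.mem_univ i)).trans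
      (sum_norm_sq_le_one_of_conjTranspose_mul_self_le_one hA j)
  exact (sq_le_one_iff₀ (norm_nonneg _)).mp hsq

lemma sum_norm_mul_norm_le_one {A B : Matrix m n ℂ} (hA : Aᴴ * A ≤ 1) (hB : Bᴴ * B ≤ 1)
    (j : n) : ∑ i, ‖A i j‖ * ‖B i j‖ ≤ 1 := by
  have hA' := sum_norm_sq_le_one_of_conjTranspose_mul_self_le_one hA j
  have hB' := sum_norm_sq_le_one_of_conjTranspose_mul_self_le_one hB j
  calc ∑ i, ‖A i j‖ * ‖B i j‖ ≤ ∑ i, (‖A i j‖ ^ 2 + ‖B i j‖ ^ 2) / 2 :=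
        Finset.sum_le_sum fun i _ => by nlinarith [two_mul_le_add_sq ‖A i j‖ ‖B i j‖]
    _ ≤ 1 := by rw [← Finset.sum_div, Finset.sum_add_distrib]; linarith

variable [Fintype n]

lemma conjTranspose_mul_self_mul_le_one {A B : Matrix n n ℂ} (hA : Aᴴ * A ≤ 1)
    (hB : Bᴴ * B ≤ 1) : (A * B)ᴴ * (A * B) ≤ 1 :=
  calc (A * B)ᴴ * (A * B) = star B * (Aᴴ * A) * B := by
        simp [conjTranspose_mul, Matrix.mul_assoc, star_eq_conjTranspose]
    _ ≤ star B * 1 * B := star_left_conjugate_le_conjugate hA B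
    _ ≤ 1 := by simpa [star_eq_conjTranspose] using hB

lemma conjTranspose_mul_self_le_one_of_mem_unitaryGroup {U : Matrix n n ℂ}
    (hU : U ∈ unitaryGroup n ℂ) : Uᴴ * U ≤ 1 :=
  (mem_unitaryGroup_iff'.mp hU).le

end Contraction

section PartialIsometry

variable {m n : Type*} [Fintype m] [Fintype n]

def IsPartialIsometry (A : Matrix m n ℂ) : Prop := A * Aᴴ * A = A

lemma IsPartialIsometry.conjTranspose {A : Matrix m n ℂ} (hA : A.IsPartialIsometry) :
    Aᴴ.IsPartialIsometry :=
  calc Aᴴ * Aᴴᴴ * Aᴴ = (A * Aᴴ * A)ᴴ := by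
        simp only [conjTranspose_mul, conjTranspose_conjTranspose, Matrix.mul_assoc]
    _ = Aᴴ := by rw [hA]

lemma IsPartialIsometry.conjTranspose_mul_self_le_one [DecidableEq n]
    {A : Matrix m n ℂ} (hA : A.IsPartialIsometry) : Aᴴ * A ≤ 1 := by
  refine IsStarProjection.le_one ⟨?_, (isHermitian_conjTranspose_mul_self A).isSelfAdjoint⟩
  calc Aᴴ * A * (Aᴴ * A) = Aᴴ * (A * Aᴴ * A) := by simp only [Matrix.mul_assoc]
    _ = Aᴴ * A := by rw [hA]

end PartialIsometry

section SVD

variable {n : Type*} [Fintype n] [DecidableEq n] (b : Matrix n n ℂ)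

-- Unsorted singular values, in the order of the eigenvalues of `bᴴ * b`.
noncomputable def svdVals : n → ℝ :=
  fun i => √((isHermitian_conjTranspose_mul_self b).eigenvalues i)

noncomputable def svdRight : Matrix n n ℂ :=
  (isHermitian_conjTranspose_mul_self b).eigenvectorUnitary

-- Since `0⁻¹ = 0`, the columns belonging to zero singular values vanish; this makes `svdLeft b`
-- a partial isometry.
noncomputable def svdLeft : Matrix n n ℂ :=
  b * b.svdRight * diagonal fun i => (b.svdVals i : ℂ)⁻¹

lemma svdVals_nonneg (i : n) : 0 ≤ b.svdVals i := Real.sqrt_nonneg _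

lemma svdRight_mem_unitaryGroup : b.svdRight ∈ unitaryGroup n ℂ := SetLike.coe_mem _

lemma conjTranspose_mul_svdRight_mul_mul_svdRight :
    (b * b.svdRight)ᴴ * (b * b.svdRight) = diagonal fun i => (b.svdVals i : ℂ) ^ 2 := by
  have hb := isHermitian_conjTranspose_mul_self b
  calc (b * b.svdRight)ᴴ * (b * b.svdRight) = b.svdRightᴴ * (bᴴ * b) * b.svdRight := by
        simp only [conjTranspose_mul, Matrix.mul_assoc]
    _ = diagonal fun i => (hb.eigenvalues i : ℂ) := by
        rw [svdRight, ← star_eq_conjTranspose]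
        simpa [Function.comp_def] using hb.conjStarAlgAut_star_eigenvectorUnitary
    _ = diagonal fun i => (b.svdVals i : ℂ) ^ 2 := by
        simp only [svdVals, ← Complex.ofReal_pow,
          Real.sq_sqrt ((posSemidef_conjTranspose_mul_self b).eigenvalues_nonneg _)]

lemma mul_svdRight_mul_diagonal_inv_mul_self :
    b * b.svdRight * diagonal (fun i => (b.svdVals i : ℂ)⁻¹ * b.svdVals i) =
      b * b.svdRight := by
  set X := b * b.svdRight
  have hker : X * (1 - diagonal (fun i => (b.svdVals i : ℂ)⁻¹ * b.svdVals i)) = 0 := by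
    rw [← diagonal_one, diagonal_sub, ← conjTranspose_mul_self_eq_zero, conjTranspose_mul,
      Matrix.mul_assoc, ← Matrix.mul_assoc Xᴴ, conjTranspose_mul_svdRight_mul_mul_svdRight,
      diagonal_conjTranspose, diagonal_mul_diagonal, diagonal_mul_diagonal, ← diagonal_zero]
    congr 1; ext i
    by_cases h : (b.svdVals i : ℂ) = 0 <;> simp [h]
  rw [Matrix.mul_sub, Matrix.mul_one, sub_eq_zero] at hker
  exact hker.symm

lemma svdLeft_mul_diagonal_svdVals :
    b.svdLeft * diagonal (fun i => (b.svdVals i : ℂ)) = b * b.svdRight := by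
  rw [svdLeft, Matrix.mul_assoc, diagonal_mul_diagonal, mul_svdRight_mul_diagonal_inv_mul_self]

lemma svdLeft_mul_diagonal_svdVals_mul_conjTranspose_svdRight :
    b.svdLeft * diagonal (fun i => (b.svdVals i : ℂ)) * b.svdRightᴴ = b := by
  rw [svdLeft_mul_diagonal_svdVals, Matrix.mul_assoc, ← star_eq_conjTranspose,
    mem_unitaryGroup_iff.mp b.svdRight_mem_unitaryGroup, Matrix.mul_one]

lemma conjTranspose_svdLeft_mul_svdLeft :
    b.svdLeftᴴ * b.svdLeft = diagonal fun i => (b.svdVals i : ℂ)⁻¹ * b.svdVals i := by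
  rw [svdLeft, conjTranspose_mul, Matrix.mul_assoc, ← Matrix.mul_assoc (b * b.svdRight)ᴴ,
    conjTranspose_mul_svdRight_mul_mul_svdRight, diagonal_conjTranspose, diagonal_mul_diagonal,
    diagonal_mul_diagonal]
  congr 1; ext i
  by_cases h : (b.svdVals i : ℂ) = 0 <;> simp [h, pow_two]

lemma isPartialIsometry_svdLeft : b.svdLeft.IsPartialIsometry := by
  rw [IsPartialIsometry, Matrix.mul_assoc, conjTranspose_svdLeft_mul_svdLeft, svdLeft,
    Matrix.mul_assoc, diagonal_mul_diagonal]
  congr 2; ext i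
  by_cases h : (b.svdVals i : ℂ) = 0 <;> simp [h]

lemma trace_mul_eq_sum_svdVals_mul (c : Matrix n n ℂ) :
    (b * c).trace = ∑ i, (b.svdVals i : ℂ) * (b.svdRightᴴ * c * b.svdLeft) i i := by
  conv_lhs => rw [← b.svdLeft_mul_diagonal_svdVals_mul_conjTranspose_svdRight]
  rw [Matrix.mul_assoc, trace_mul_cycle, trace_mul_comm]
  simp [trace, diagonal_mul, Matrix.mul_assoc]

lemma sum_norm_diag_le_sum_svdVals : ∑ i, ‖b i i‖ ≤ ∑ j, b.svdVals j := by
  have hU := b.isPartialIsometry_svdLeft.conjTranspose_mul_self_le_one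
  have hV := conjTranspose_mul_self_le_one_of_mem_unitaryGroup b.svdRight_mem_unitaryGroup
  have hentry : ∀ i, b i i = ∑ j, b.svdLeft i j * b.svdVals j * star (b.svdRight i j) := by
    intro i
    conv_lhs => rw [← b.svdLeft_mul_diagonal_svdVals_mul_conjTranspose_svdRight]
    rw [mul_apply]
    simp only [mul_diagonal, conjTranspose_apply]
  calc ∑ i, ‖b i i‖ ≤ ∑ i, ∑ j, b.svdVals j * (‖b.svdLeft i j‖ * ‖b.svdRight i j‖) := by
        refine Finset.sum_le_sum fun i _ => ?_
        rw [hentry]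
        refine (norm_sum_le _ _).trans (Finset.sum_le_sum fun j _ => le_of_eq ?_)
        simp [abs_of_nonneg (b.svdVals_nonneg j)]
        ring
    _ = ∑ j, b.svdVals j * ∑ i, ‖b.svdLeft i j‖ * ‖b.svdRight i j‖ := by
        rw [Finset.sum_comm]; simp only [Finset.mul_sum]
    _ ≤ ∑ j, b.svdVals j * 1 := Finset.sum_le_sum fun j _ =>
        mul_le_mul_of_nonneg_left (sum_norm_mul_norm_le_one hU hV j) (b.svdVals_nonneg j)
    _ = ∑ j, b.svdVals j := by simp

lemma card_svdVals_ne_zero : Fintype.card {j // b.svdVals j ≠ 0} = b.rank := by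
  rw [← rank_conjTranspose_mul_self,
    (isHermitian_conjTranspose_mul_self b).rank_eq_card_non_zero_eigs]
  simp only [svdVals, ne_eq,
    Real.sqrt_eq_zero ((posSemidef_conjTranspose_mul_self b).eigenvalues_nonneg _)]

variable {b}

lemma svdVals_le_one (hb : bᴴ * b ≤ 1) (j : n) : b.svdVals j ≤ 1 := by
  have hd : (diagonal fun i => (b.svdVals i : ℂ) ^ 2) ≤ 1 := by
    rw [← conjTranspose_mul_svdRight_mul_mul_svdRight]
    exact conjTranspose_mul_self_mul_le_one hb
      (conjTranspose_mul_self_le_one_of_mem_unitaryGroup b.svdRight_mem_unitaryGroup)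
  rw [le_iff, ← diagonal_one, diagonal_sub, posSemidef_diagonal_iff] at hd
  have hj := hd j
  rw [← Complex.ofReal_pow, ← Complex.ofReal_one, ← Complex.ofReal_sub, Complex.zero_le_real,
    sub_nonneg] at hj
  exact (pow_le_one_iff_of_nonneg (b.svdVals_nonneg j) two_ne_zero).mp hj

lemma sum_svdVals_le_rank (hb : bᴴ * b ≤ 1) : ∑ j, b.svdVals j ≤ b.rank :=
  calc ∑ j, b.svdVals j ≤ ∑ j, if b.svdVals j ≠ 0 then (1 : ℝ) else 0 :=
        Finset.sum_le_sum fun j _ => by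
          split_ifs with hj
          · exact svdVals_le_one hb j
          · simp_all
    _ = b.rank := by rw [Finset.sum_boole, ← card_svdVals_ne_zero, Fintype.card_subtype]

lemma sum_norm_diag_le_rank (hb : bᴴ * b ≤ 1) : ∑ i, ‖b i i‖ ≤ b.rank :=
  (sum_norm_diag_le_sum_svdVals b).trans (sum_svdVals_le_rank hb)

end SVD

end Matrix

section Rearrangement

variable {ι : Type*} [Fintype ι] [DecidableEq ι] {s t : ι → ℝ} {T : Finset ι}

lemma sum_mul_le_sum_of_threshold {θ : ℝ} (hθ : 0 ≤ θ) (hT : ∀ i ∈ T, θ ≤ s i)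
    (hTc : ∀ j ∉ T, s j ≤ θ) (ht0 : ∀ i, 0 ≤ t i) (ht1 : ∀ i, t i ≤ 1)
    (hsum : ∑ i, t i ≤ T.card) : ∑ i, s i * t i ≤ ∑ i ∈ T, s i := by
  have hin : ∑ i ∈ T, (s i - θ) * t i ≤ ∑ i ∈ T, (s i - θ) := Finset.sum_le_sum fun i hi =>
    mul_le_of_le_one_right (sub_nonneg.mpr (hT i hi)) (ht1 i)
  have hout : ∑ j ∈ Tᶜ, (s j - θ) * t j ≤ 0 := Finset.sum_nonpos fun j hj =>
    mul_nonpos_of_nonpos_of_nonneg (sub_nonpos.mpr (hTc j (Finset.mem_compl.mp hj))) (ht0 j)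
  calc ∑ i, s i * t i = ∑ i, (s i - θ) * t i + θ * ∑ i, t i := by
        rw [Finset.mul_sum, ← Finset.sum_add_distrib]; ring_nf
    _ = ∑ i ∈ T, (s i - θ) * t i + ∑ j ∈ Tᶜ, (s j - θ) * t j + θ * ∑ i, t i := by
        rw [Finset.sum_add_sum_compl]
    _ ≤ ∑ i ∈ T, (s i - θ) + 0 + θ * T.card := by gcongr
    _ = ∑ i ∈ T, s i := by rw [Finset.sum_sub_distrib, Finset.sum_const, nsmul_eq_mul]; ring

lemma sum_mul_le_sum_of_forall_le (hs : ∀ i, 0 ≤ s i) (hT : ∀ i ∈ T, ∀ j ∉ T, s j ≤ s i)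
    (ht0 : ∀ i, 0 ≤ t i) (ht1 : ∀ i, t i ≤ 1) (hsum : ∑ i, t i ≤ T.card) :
    ∑ i, s i * t i ≤ ∑ i ∈ T, s i := by
  rcases T.eq_empty_or_nonempty with rfl | hne
  · exact sum_mul_le_sum_of_threshold (θ := ∑ i, s i) (Finset.sum_nonneg fun i _ => hs i)
      (by simp) (fun j _ => Finset.single_le_sum (fun i _ => hs i) (Finset.mem_univ j))
      ht0 ht1 hsum
  · exact sum_mul_le_sum_of_threshold (θ := T.inf' hne s) (Finset.le_inf' _ _ fun i _ => hs i)
      (fun i hi => Finset.inf'_le s hi) (fun j hj => Finset.le_inf' _ _ fun i hi => hT i hi j hj)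
      ht0 ht1 hsum

end Rearrangement

namespace Matrix

variable {n : Type*} [Fintype n] [DecidableEq n]

lemma norm_trace_mul_le_sum_svdVals (a : Matrix n n ℂ) {c : Matrix n n ℂ} {T : Finset n}
    (hT : ∀ i ∈ T, ∀ j ∉ T, a.svdVals j ≤ a.svdVals i) (hc : cᴴ * c ≤ 1)
    (hrank : c.rank ≤ T.card) : ‖(a * c).trace‖ ≤ ∑ i ∈ T, a.svdVals i := by
  set d := a.svdRightᴴ * c * a.svdLeft
  have hV : a.svdRightᴴᴴ * a.svdRightᴴ ≤ 1 := conjTranspose_mul_self_le_one_of_mem_unitaryGroup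
    (Unitary.star_mem a.svdRight_mem_unitaryGroup)
  have hd : dᴴ * d ≤ 1 := conjTranspose_mul_self_mul_le_one
    (conjTranspose_mul_self_mul_le_one hV hc)
    a.isPartialIsometry_svdLeft.conjTranspose_mul_self_le_one
  have hdrank : (d.rank : ℝ) ≤ T.card := by
    exact_mod_cast ((rank_mul_le_left _ _).trans (rank_mul_le_right _ _)).trans hrank
  calc ‖(a * c).trace‖ = ‖∑ i, (a.svdVals i : ℂ) * d i i‖ := by
        rw [trace_mul_eq_sum_svdVals_mul]
    _ ≤ ∑ i, a.svdVals i * ‖d i i‖ := (norm_sum_le _ _).trans_eq <| Finset.sum_congr rfl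
        fun i _ => by rw [norm_mul, Complex.norm_real, Real.norm_of_nonneg (a.svdVals_nonneg i)]
    _ ≤ ∑ i ∈ T, a.svdVals i := sum_mul_le_sum_of_forall_le a.svdVals_nonneg hT
        (fun i => norm_nonneg _)
        (fun i => norm_apply_le_one_of_conjTranspose_mul_self_le_one hd i i)
        ((sum_norm_diag_le_rank hd).trans hdrank)

lemma exists_trace_mul_eq_sum_svdVals (a : Matrix n n ℂ) (T : Finset n) :
    ∃ c : Matrix n n ℂ, cᴴ * c ≤ 1 ∧ c.rank ≤ T.card ∧
      (a * c).trace = ∑ i ∈ T, (a.svdVals i : ℂ) := by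
  set η : n → ℂ := fun i => if i ∈ T then 1 else 0
  have hη : (diagonal η)ᴴ * diagonal η ≤ 1 := by
    rw [diagonal_conjTranspose, diagonal_mul_diagonal, le_iff, ← diagonal_one, diagonal_sub,
      posSemidef_diagonal_iff]
    intro i
    by_cases hi : i ∈ T <;> simp [η, hi]
  refine ⟨a.svdRight * diagonal η * a.svdLeftᴴ, ?_, ?_, ?_⟩
  · exact conjTranspose_mul_self_mul_le_one
      (conjTranspose_mul_self_mul_le_one
        (conjTranspose_mul_self_le_one_of_mem_unitaryGroup a.svdRight_mem_unitaryGroup) hη)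
      a.isPartialIsometry_svdLeft.conjTranspose.conjTranspose_mul_self_le_one
  · refine (rank_mul_le_left _ _).trans ((rank_mul_le_right _ _).trans_eq ?_)
    rw [rank_diagonal, Fintype.card_subtype]
    congr 1; ext i; by_cases hi : i ∈ T <;> simp [η, hi]
  · calc (a * (a.svdRight * diagonal η * a.svdLeftᴴ)).trace
          = (a.svdLeft * diagonal (fun i => (a.svdVals i : ℂ)) * diagonal η *
              a.svdLeftᴴ).trace := by
          rw [svdLeft_mul_diagonal_svdVals, ← Matrix.mul_assoc, ← Matrix.mul_assoc]
      _ = (a.svdLeftᴴ * a.svdLeft * diagonal (fun i => (a.svdVals i : ℂ)) * diagonal η).trace := by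
          rw [trace_mul_comm]; simp only [Matrix.mul_assoc]
      _ = ∑ i ∈ T, (a.svdVals i : ℂ) := by
          rw [conjTranspose_svdLeft_mul_svdLeft, diagonal_mul_diagonal, diagonal_mul_diagonal,
            trace_diagonal]
          simp [η, Finset.sum_ite_mem]

end Matrix

section TopIndices

variable {m : ℕ}

-- `Tuple.sort s` lists the indices in increasing order of `s`, so reversing it first picks out
-- the indices of the `k` largest values.
noncomputable def topIndices (s : Fin m → ℝ) (k : ℕ) : Finset (Fin m) :=
  (Finset.univ.filter fun i : Fin m => (i : ℕ) < k).map
    (Fin.revPerm.trans (Tuple.sort s)).toEmbedding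

lemma card_topIndices (s : Fin m → ℝ) {k : ℕ} (hk : k ≤ m) : (topIndices s k).card = k := by
  simp [topIndices, Fin.card_filter_val_lt, hk]

lemma le_of_mem_topIndices {s : Fin m → ℝ} {k : ℕ} {i j : Fin m} (hi : i ∈ topIndices s k)
    (hj : j ∉ topIndices s k) : s j ≤ s i := by
  simp only [topIndices, Finset.mem_map, Finset.mem_filter, Finset.mem_univ, true_and,
    Equiv.coe_toEmbedding, Equiv.trans_apply, Fin.revPerm_apply, not_exists, not_and] at hi hj
  obtain ⟨i', hi', rfl⟩ := hi
  have hj' : k ≤ ((Tuple.sort s).symm j).rev := by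
    by_contra! h
    exact hj _ h (by simp)
  have hle : (Tuple.sort s).symm j ≤ i'.rev := by
    rw [Fin.le_def, Fin.val_rev] at *
    omega
  simpa using Tuple.monotone_sort s hle

lemma kyFanSum_eq_sum_topIndices (a : Matrix (Fin m) (Fin m) ℂ) (k : ℕ) :
    kyFanSum a k =
      ∑ i ∈ topIndices (isHermitian_conjTranspose_mul_self a).eigenvalues k, a.svdVals i := by
  rw [topIndices, Finset.sum_map]
  rfl

end TopIndices

/-- Matrix instance of Lemma 2.1 (Ky Fan duality): the sum of the `k` largest singular
values of `a` equals the supremum of `|Tr (a * c)|` over contractions `c`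
(i.e. `1 - cᴴ * c` positive semidefinite) of rank at most `k`. -/
theorem stmt_6 {n : ℕ} (a : Matrix (Fin n) (Fin n) ℂ) (k : ℕ) (hk : k ≤ n) :
    kyFanSum a k =
      sSup {x : ℝ | ∃ c : Matrix (Fin n) (Fin n) ℂ,
        (1 - cᴴ * c).PosSemidef ∧ c.rank ≤ k ∧ x = ‖(a * c).trace‖} := by
  set T := topIndices (isHermitian_conjTranspose_mul_self a).eigenvalues k
  have hT : ∀ i ∈ T, ∀ j ∉ T, a.svdVals j ≤ a.svdVals i := fun i hi j hj =>
    Real.sqrt_le_sqrt (le_of_mem_topIndices hi hj)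
  have hcard : T.card = k := card_topIndices _ hk
  rw [kyFanSum_eq_sum_topIndices]
  refine (IsGreatest.csSup_eq ⟨?_, ?_⟩).symm
  · obtain ⟨c, hc, hrank, htrace⟩ := a.exists_trace_mul_eq_sum_svdVals T
    refine ⟨c, hc, hrank.trans_eq hcard, ?_⟩
    rw [htrace, ← Complex.ofReal_sum, Complex.norm_real,
      Real.norm_of_nonneg (Finset.sum_nonneg fun i _ => a.svdVals_nonneg i)]
  · rintro x ⟨c, hc, hrank, rfl⟩
    exact a.norm_trace_mul_le_sum_svdVals hT hc (hrank.trans_eq hcard.symm)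
end
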